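/- arXiv:2002.03338 — 5 statements merged into one kernel-verified Lean document; each statement's English description precedes it below -/
import Mathlib

section
/- For every field k and every finite group G, there exist infinitely many pairwise non-isomorphic finite-dimensional regular evolution algebras X over k (i.e., evolution algebras with X² = X) such that the group of algebra automorphisms of X is isomorphic to G. -/
/-- A finite-dimensional evolution algebra over a field `k`: a finite-dimensional
`k`-vector space equipped with a `k`-bilinear commutative multiplication admitting a
natural basis, i.e. a basis whose distinct elements multiply to zero. -/
structure EvolutionAlgebra (k : Type u) [Field k] : Type (u + 1) where
  carrier : Type u
  [isAddCommGroup : AddCommGroup carrier]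
  [isModule : Module k carrier]
  mul : carrier →ₗ[k] carrier →ₗ[k] carrier
  mul_comm : ∀ x y : carrier, mul x y = mul y x
  [isFiniteDimensional : FiniteDimensional k carrier]
  natural : ∃ (ι : Type u) (_ : Fintype ι) (b : Module.Basis ι k carrier),
      ∀ i j, i ≠ j → mul (b i) (b j) = 0

attribute [instance] EvolutionAlgebra.isAddCommGroup EvolutionAlgebra.isModule
  EvolutionAlgebra.isFiniteDimensional

/-- `X` is regular if `X² = X`, i.e. the span of all products is everything. -/
def EvolutionAlgebra.IsRegular {k : Type u} [Field k] (A : EvolutionAlgebra k) : Prop :=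
  Submodule.span k {z : A.carrier | ∃ x y : A.carrier, z = A.mul x y} = ⊤

/-- Isomorphism of evolution algebras: a `k`-linear bijection commuting with
the multiplications. -/
def EvolutionAlgebra.Iso {k : Type u} [Field k] (A B : EvolutionAlgebra k) : Prop :=
  ∃ e : A.carrier ≃ₗ[k] B.carrier, ∀ x y : A.carrier, e (A.mul x y) = B.mul (e x) (e y)

/-- The automorphism group of an evolution algebra: the subgroup of `k`-linear
bijections of the carrier commuting with the multiplication. -/
def EvolutionAlgebra.Aut {k : Type u} [Field k] (A : EvolutionAlgebra k) :
    Subgroup (A.carrier ≃ₗ[k] A.carrier) where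
  carrier := {f | ∀ x y : A.carrier, f (A.mul x y) = A.mul (f x) (f y)}
  one_mem' := by intro x y; rfl
  mul_mem' := by
    intro f g hf hg x y
    show f (g (A.mul x y)) = A.mul (f (g x)) (f (g y))
    rw [hg, hf]
  inv_mem' := by
    intro f hf x y
    apply f.injective
    show f (f.symm (A.mul x y)) = f (A.mul (f.symm x) (f.symm y))
    rw [hf]
    simp

/-!
A reflexive relation `r` on a finite set `V` defines the evolution algebra on `V → k` with
natural basis `e v` and `e v * e v = ∑ w with r v w, e w`. If the non-loop part of `r` is well
founded, these squares are unitriangular in the basis `e`, so the algebra is regular and the squares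
are linearly independent. Then an automorphism sends the pairwise orthogonal `e v` to vectors with
pairwise disjoint supports, i.e. to multiples of a permuted basis; comparing `f (e v * e v)` in
two ways forces the multiples to be `1` and the permutation to preserve `r`. So the automorphism
group is that of the digraph `r`.

For `r` take, on `G × Fin K`, a chain over each `g` together with edges `(g, 0) → (g * s, c s)`
for an injective colouring `c` of `G` by levels `≥ 2`. An automorphism fixes the levels, hence
maps each chain to a chain, and preserves the colours, hence is a left translation. Letting `K`
grow changes the dimension `card G * K`.
-/

open Finset Submodule

theorem exists_equiv_eq_single_of_mul_eq_zero {V R : Type*} [Finite V] [DecidableEq V]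
    [MulZeroClass R] [NoZeroDivisors R] (x : V → V → R) (hx : ∀ v, x v ≠ 0)
    (hdisj : ∀ u v, u ≠ v → ∀ i, x u i * x v i = 0) :
    ∃ σ : V ≃ V, ∀ v, x v = Pi.single (σ v) (x v (σ v)) := by
  choose q hq using fun v => Function.ne_iff.1 (hx v)
  have hcross : ∀ u v, u ≠ v → x v (q u) = 0 := fun u v huv =>
    (mul_eq_zero.1 (hdisj u v huv (q u))).resolve_left (hq u)
  have hinj : q.Injective := fun u v h => by
    by_contra huv
    exact hq v (h ▸ hcross u v huv)
  let σ := Equiv.ofBijective q (Finite.injective_iff_bijective.1 hinj)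
  refine ⟨σ, fun v => funext fun i => ?_⟩
  obtain ⟨u, rfl⟩ := σ.surjective i
  by_cases huv : u = v
  · subst huv
    simp
  · rw [Pi.single_eq_of_ne (σ.injective.ne huv)]
    exact hcross u v huv

namespace EvolutionAlgebra

theorem Iso.finrank_eq {k : Type u} [Field k] {A B : EvolutionAlgebra k} (h : A.Iso B) :
    Module.finrank k A.carrier = Module.finrank k B.carrier :=
  h.elim fun e _ => e.finrank_eq

section OfRel

variable (k : Type u) [Field k] {V : Type u} [Fintype V] [DecidableEq V]
  (r : V → V → Prop) [DecidableRel r]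

def relSq (v : V) : V → k := fun w => if r v w then 1 else 0

def relMul : (V → k) →ₗ[k] (V → k) →ₗ[k] (V → k) :=
  LinearMap.mk₂ k (fun x y => ∑ v, (x v * y v) • relSq k r v)
    (fun x x' y => by simp only [Pi.add_apply, add_mul, add_smul, sum_add_distrib])
    (fun c x y => by simp only [Pi.smul_apply, smul_eq_mul, smul_sum, smul_smul, mul_assoc])
    (fun x y y' => by simp only [Pi.add_apply, mul_add, add_smul, sum_add_distrib])
    (fun c x y => by simp only [Pi.smul_apply, smul_eq_mul, smul_sum, smul_smul, mul_left_comm])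

variable {k r}

omit [DecidableEq V] in
theorem relMul_apply (x y : V → k) : relMul k r x y = ∑ v, (x v * y v) • relSq k r v := rfl

theorem relMul_single_single (i j : V) (a b : k) :
    relMul k r (Pi.single i a) (Pi.single j b) = if i = j then (a * b) • relSq k r i else 0 := by
  split_ifs with h
  · subst h
    rw [relMul_apply, sum_eq_single i (fun v _ hv => by simp [hv]) (by simp)]
    simp
  · rw [relMul_apply, sum_eq_zero fun v _ => ?_]
    by_cases hv : v = i
    · simp [hv, h]
    · simp [hv]

theorem relMul_single_self (v : V) : relMul k r (Pi.single v 1) (Pi.single v 1) = relSq k r v := by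
  simp [relMul_single_single]

variable (k r) in
def ofRel : EvolutionAlgebra k where
  carrier := V → k
  mul := relMul k r
  mul_comm x y := by simp_rw [relMul_apply, _root_.mul_comm (x _)]
  natural := ⟨V, inferInstance, Pi.basisFun k V, fun i j hij => by
    simp [relMul_single_single, hij]⟩

theorem finrank_ofRel : Module.finrank k (ofRel k r).carrier = Fintype.card V :=
  Module.finrank_fintype_fun_eq_card k

theorem span_range_relSq (hrefl : ∀ v, r v v) (hwf : WellFounded fun w v => r v w ∧ v ≠ w) :
    span k (Set.range (relSq k r)) = ⊤ := by
  have hsingle (v : V) : Pi.single v (1 : k) ∈ span k (Set.range (relSq k r)) := by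
    induction v using hwf.induction with | _ v ih =>
      have hsplit : Pi.single v 1 + ∑ w ∈ univ.erase v, Pi.single w (relSq k r v w) =
          relSq k r v := by
        rw [← univ_sum_single (relSq k r v), ← add_sum_erase _ _ (mem_univ v)]
        simp [relSq, hrefl v]
      rw [eq_sub_of_add_eq hsplit]
      refine sub_mem (subset_span ⟨v, rfl⟩) (sum_mem fun w hw => ?_)
      by_cases h : r v w
      · simpa [relSq, h] using ih w ⟨h, (ne_of_mem_erase hw).symm⟩
      · simp [relSq, h]
  rw [eq_top_iff, ← (Pi.basisFun k V).span_eq, span_le]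
  rintro _ ⟨v, rfl⟩
  simpa using hsingle v

theorem linearIndependent_relSq (hrefl : ∀ v, r v v)
    (hwf : WellFounded fun w v => r v w ∧ v ≠ w) : LinearIndependent k (relSq k r) :=
  linearIndependent_of_top_le_span_of_card_eq_finrank (span_range_relSq hrefl hwf).ge
    (Module.finrank_fintype_fun_eq_card k).symm

theorem ofRel_isRegular (hrefl : ∀ v, r v v) (hwf : WellFounded fun w v => r v w ∧ v ≠ w) :
    (ofRel k r).IsRegular := by
  refine eq_top_iff.2 ((span_range_relSq hrefl hwf).ge.trans (span_mono ?_))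
  rintro _ ⟨v, rfl⟩
  exact ⟨(Pi.single v 1 : V → k), Pi.single v 1, (relMul_single_self v).symm⟩

omit [DecidableEq V] in
theorem relMul_eq_zero_iff (hli : LinearIndependent k (relSq k r)) {x y : V → k} :
    relMul k r x y = 0 ↔ ∀ v, x v * y v = 0 :=
  ⟨fun h => Fintype.linearIndependent_iff.1 hli _ h, fun h => by simp [relMul_apply, h]⟩

variable {f : (V → k) ≃ₗ[k] (V → k)}

theorem exists_equiv_map_single_of_map_relMul (hli : LinearIndependent k (relSq k r))
    (hf : ∀ x y, f (relMul k r x y) = relMul k r (f x) (f y)) :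
    ∃ (σ : V ≃ V) (c : V → k), ∀ v, f (Pi.single v 1) = Pi.single (σ v) (c v) := by
  obtain ⟨σ, hσ⟩ := exists_equiv_eq_single_of_mul_eq_zero (fun v => f (Pi.single v 1))
    (fun v => by simp) fun u v huv => (relMul_eq_zero_iff hli).1 <| by
      rw [← hf, relMul_single_single, if_neg huv, map_zero]
  exact ⟨σ, _, hσ⟩

/-- Comparing the coordinates at `σ w` of the two expansions of `f (relSq k r v)`, one from
`relSq k r v = e v * e v`, the other from `relSq k r v = ∑ w, relSq k r v w • e w`. -/
theorem relSq_mul_eq_of_map_single (hf : ∀ x y, f (relMul k r x y) = relMul k r (f x) (f y))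
    {σ : V ≃ V} {c : V → k} (hfc : ∀ v, f (Pi.single v 1) = Pi.single (σ v) (c v))
    (v w : V) :
    relSq k r v w * c w = c v * c v * relSq k r (σ v) (σ w) := by
  have hsq : f (relSq k r v) = (c v * c v) • relSq k r (σ v) := by
    rw [← relMul_single_self, hf, hfc, relMul_single_single, if_pos rfl]
  have hsum : f (relSq k r v) = ∑ u, relSq k r v u • Pi.single (σ u) (c u) := by
    conv_lhs => rw [← univ_sum_single (relSq k r v)]
    simp_rw [map_sum, ← hfc, ← map_smul, ← Pi.single_smul, smul_eq_mul, mul_one]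
  have := congrFun (hsq.symm.trans hsum) (σ w)
  simpa [Finset.sum_apply, Pi.single_apply, σ.injective.eq_iff] using this.symm

theorem exists_relIso_map_single_of_map_relMul (hrefl : ∀ v, r v v)
    (hli : LinearIndependent k (relSq k r))
    (hf : ∀ x y, f (relMul k r x y) = relMul k r (f x) (f y)) :
    ∃ σ : r ≃r r, ∀ v, f (Pi.single v 1) = Pi.single (σ v) 1 := by
  obtain ⟨σ, c, hfc⟩ := exists_equiv_map_single_of_map_relMul hli hf
  have hrel := relSq_mul_eq_of_map_single hf hfc
  have hc : ∀ v, c v = 1 := fun v => by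
    have hne : c v ≠ 0 := fun h => by
      have := hfc v
      rw [h, Pi.single_zero, LinearEquiv.map_eq_zero_iff] at this
      simpa using congrFun this v
    have := hrel v v
    simp only [relSq, hrefl, if_true, one_mul, mul_one] at this
    exact (mul_left_cancel₀ hne (by rw [mul_one, ← this])).symm
  refine ⟨⟨σ, fun {v w} => ?_⟩, fun v => by rw [hfc, hc]; rfl⟩
  have := hrel v w
  simp only [hc, mul_one, relSq] at this
  by_cases hvw : r v w <;> by_cases hσ : r (σ v) (σ w) <;> simp [hvw, hσ] at this ⊢

variable (k) in
def relAut (σ : r ≃r r) : (V → k) ≃ₗ[k] (V → k) :=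
  LinearEquiv.funCongrLeft k k σ.toEquiv.symm

omit [Fintype V] [DecidableRel r] in
theorem relAut_single (σ : r ≃r r) (v : V) (a : k) :
    relAut k σ (Pi.single v a) = Pi.single (σ v) a :=
  Pi.single_comp_equiv σ.toEquiv.symm v a

omit [DecidableEq V] in
theorem relAut_relMul (σ : r ≃r r) (x y : V → k) :
    relAut k σ (relMul k r x y) = relMul k r (relAut k σ x) (relAut k σ y) := by
  funext w
  simp only [relAut, LinearEquiv.funCongrLeft_apply, LinearMap.funLeft_apply, relMul_apply,
    Finset.sum_apply, Pi.smul_apply, smul_eq_mul]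
  conv_rhs => rw [← σ.toEquiv.sum_comp]
  refine sum_congr rfl fun v _ => ?_
  have : r v (σ.toEquiv.symm w) ↔ r (σ v) w := by
    rw [← σ.map_rel_iff]
    exact iff_of_eq (congrArg _ (σ.toEquiv.apply_symm_apply w))
  simp only [relSq, Equiv.symm_apply_apply, this]
  rfl

variable (k r) in
def relIsoToAut : (r ≃r r) →* (ofRel k r).Aut where
  toFun σ := ⟨relAut k σ, relAut_relMul σ⟩
  map_one' := rfl
  map_mul' _ _ := rfl

theorem relIsoToAut_bijective (hrefl : ∀ v, r v v) (hli : LinearIndependent k (relSq k r)) :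
    Function.Bijective (relIsoToAut k r) := by
  refine ⟨fun σ τ h => RelIso.ext fun v => ?_, fun f => ?_⟩
  · have : relAut k σ (Pi.single v (1 : k)) = relAut k τ (Pi.single v 1) :=
      LinearEquiv.congr_fun (congrArg Subtype.val h) _
    rw [relAut_single, relAut_single] at this
    by_contra hne
    simpa [Pi.single_apply, hne] using congrFun this (σ v)
  · obtain ⟨σ, hσ⟩ := exists_relIso_map_single_of_map_relMul hrefl hli f.2
    refine ⟨σ, Subtype.ext (LinearEquiv.toLinearMap_injective
      ((Pi.basisFun k V).ext fun v => ?_))⟩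
    rw [Pi.basisFun_apply]
    exact (relAut_single σ v 1).trans (hσ v).symm

noncomputable def autMulEquivRelIso (hrefl : ∀ v, r v v)
    (hli : LinearIndependent k (relSq k r)) : (ofRel k r).Aut ≃* (r ≃r r) :=
  (MulEquiv.ofBijective _ (relIsoToAut_bijective hrefl hli)).symm

end OfRel

end EvolutionAlgebra

namespace CayleyDigraph

variable (G : Type*) [Fintype G]

/-- The edges of `s` end at level `colour G s ∈ [2, card G + 1]`: distinct for distinct `s`, and
never `1`, the level a chain reaches from `0`. -/
noncomputable def colour (s : G) : ℕ := Fintype.equivFin G s + 2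

theorem colour_injective : Function.Injective (colour G) := fun s t h =>
  (Fintype.equivFin G).injective (Fin.ext (by simpa [colour] using h))

variable {G} in
theorem two_le_colour (s : G) : 2 ≤ colour G s := Nat.le_add_left 2 _

variable {G} in
theorem colour_lt {K : ℕ} (hK : Fintype.card G + 2 ≤ K) (s : G) : colour G s < K := by
  have := (Fintype.equivFin G s).isLt
  unfold colour
  omega

variable [Group G] (K : ℕ)

def edge (v w : G × Fin K) : Prop :=
  v.1 = w.1 ∧ (w.2 : ℕ) = v.2 + 1 ∨
    (v.2 : ℕ) = 0 ∧ ∃ s, w.1 = v.1 * s ∧ (w.2 : ℕ) = colour G s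

def rel (v w : G × Fin K) : Prop := v = w ∨ edge G K v w

variable {G K}

theorem edge.snd_lt {v w : G × Fin K} (h : edge G K v w) : v.2 < w.2 := by
  rcases h with ⟨-, h⟩ | ⟨h, s, -, hs⟩
  · exact Fin.lt_def.2 (by omega)
  · exact Fin.lt_def.2 (by have := two_le_colour s; omega)

theorem edge_iff {v w : G × Fin K} : edge G K v w ↔ rel G K v w ∧ v ≠ w :=
  ⟨fun h => ⟨Or.inr h, fun hvw => (hvw ▸ h.snd_lt).false⟩,
    fun ⟨h, hne⟩ => h.resolve_left hne⟩

theorem rel_refl (v : G × Fin K) : rel G K v v := Or.inl rfl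

theorem wellFounded_rel : WellFounded fun w v => rel G K v w ∧ v ≠ w :=
  Subrelation.wf (fun h => (edge_iff.2 h).snd_lt) (InvImage.wf Prod.snd wellFounded_gt)

theorem exists_edge_iff {w : G × Fin K} : (∃ v, edge G K v w) ↔ (w.2 : ℕ) ≠ 0 := by
  refine ⟨fun ⟨v, hv⟩ => by have := Fin.lt_def.1 hv.snd_lt; omega, fun hw => ?_⟩
  exact ⟨(w.1, ⟨w.2 - 1, by omega⟩), Or.inl ⟨rfl, by simp only; omega⟩⟩

variable (p : rel G K ≃r rel G K)

theorem edge_apply_iff {v w : G × Fin K} : edge G K (p v) (p w) ↔ edge G K v w := by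
  simp only [edge_iff, p.map_rel_iff, ne_eq, p.injective.eq_iff]

theorem snd_apply_eq_zero_iff (w : G × Fin K) : ((p w).2 : ℕ) = 0 ↔ (w.2 : ℕ) = 0 := by
  have : (∃ v, edge G K v (p w)) ↔ ∃ v, edge G K v w :=
    ⟨fun ⟨v, hv⟩ => ⟨p.symm v, by rwa [← edge_apply_iff p, p.apply_symm_apply]⟩,
      fun ⟨v, hv⟩ => ⟨p v, (edge_apply_iff p).2 hv⟩⟩
  rw [exists_edge_iff, exists_edge_iff] at this
  exact not_iff_not.1 this

/-- A vertex at level `1` has a predecessor, and all its predecessors are at level `0`. -/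
theorem snd_apply_eq_one {w : G × Fin K} (hw : (w.2 : ℕ) = 1) : ((p w).2 : ℕ) = 1 := by
  have h0 : ((p w).2 : ℕ) ≠ 0 := by rw [ne_eq, snd_apply_eq_zero_iff]; omega
  by_contra h1
  let u : G × Fin K := ((p w).1, ⟨(p w).2 - 1, by omega⟩)
  have hu : edge G K (p.symm u) w := by
    rw [← edge_apply_iff p, p.apply_symm_apply]
    exact Or.inl ⟨rfl, by simp only [u]; omega⟩
  have := (snd_apply_eq_zero_iff p (p.symm u)).2 (by have := Fin.lt_def.1 hu.snd_lt; omega)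
  simp only [p.apply_symm_apply, u] at this
  omega

variable [NeZero K]

theorem apply_eq_fst_apply_zero (g : G) (j : Fin K) : p (g, j) = ((p (g, 0)).1, j) := by
  obtain ⟨j, hj⟩ := j
  induction j with
  | zero => exact Prod.ext rfl (Fin.ext ((snd_apply_eq_zero_iff p _).2 rfl))
  | succ j ih =>
    have hedge : edge G K (p (g, ⟨j, by omega⟩)) (p (g, ⟨j + 1, hj⟩)) :=
      (edge_apply_iff p).2 (Or.inl ⟨rfl, rfl⟩)
    rw [ih] at hedge
    rcases hedge with ⟨h1, h2⟩ | ⟨h0, s, -, hs⟩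
    · exact Prod.ext h1.symm (Fin.ext h2)
    · have := snd_apply_eq_one p (w := (g, ⟨j + 1, hj⟩)) (by simp only at h0 ⊢; omega)
      have := two_le_colour s
      omega

theorem fst_apply_mul (hK : Fintype.card G + 2 ≤ K) (g s : G) :
    (p (g * s, 0)).1 = (p (g, 0)).1 * s := by
  have hedge : edge G K (p (g, 0)) (p (g * s, ⟨colour G s, colour_lt hK s⟩)) :=
    (edge_apply_iff p).2 (Or.inr ⟨rfl, s, rfl, rfl⟩)
  rw [apply_eq_fst_apply_zero p g, apply_eq_fst_apply_zero p (g * s)] at hedge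
  rcases hedge with ⟨-, h⟩ | ⟨-, t, ht, hst⟩
  · have := two_le_colour s
    simp only [Fin.val_zero] at h
    omega
  · rwa [colour_injective G hst.symm] at ht

theorem apply_eq_mul (hK : Fintype.card G + 2 ≤ K) (v : G × Fin K) :
    p v = ((p (1, 0)).1 * v.1, v.2) := by
  rw [← fst_apply_mul p hK, one_mul, ← apply_eq_fst_apply_zero]

variable (G K) in
def translate : G →* (rel G K ≃r rel G K) where
  toFun a := ⟨(Equiv.mulLeft a).prodCongr (Equiv.refl _), fun {v w} => by
    simp [rel, edge, Prod.ext_iff, mul_assoc]⟩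
  map_one' := RelIso.ext fun v => Prod.ext (one_mul v.1) rfl
  map_mul' a b := RelIso.ext fun v => Prod.ext (mul_assoc a b v.1) rfl

theorem translate_bijective (hK : Fintype.card G + 2 ≤ K) :
    Function.Bijective (translate G K) := by
  have : NeZero K := ⟨by omega⟩
  refine ⟨fun a b h => ?_, fun p => ⟨(p (1, 0)).1, RelIso.ext fun v => ?_⟩⟩
  · simpa [translate] using congrArg (fun p => (p ((1 : G), (0 : Fin K))).1) h
  · exact (apply_eq_mul p hK v).symm

noncomputable def mulEquivRelIso (hK : Fintype.card G + 2 ≤ K) :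
    G ≃* (rel G K ≃r rel G K) :=
  MulEquiv.ofBijective _ (translate_bijective hK)

end CayleyDigraph

open EvolutionAlgebra CayleyDigraph in
/-- **Regular evolution algebras are universally finite.** For every field `k` and every
finite group `G` there are infinitely many pairwise non-isomorphic (finite-dimensional)
regular evolution algebras over `k` whose automorphism group is isomorphic to `G`. -/
theorem regular_evolution_algebras_universally_finite (k : Type u) [Field k]
    (G : Type v) [Group G] [Finite G] :
    ∃ A : ℕ → EvolutionAlgebra k,
      (∀ n, (A n).IsRegular) ∧
      (∀ m n, m ≠ n → ¬ (A m).Iso (A n)) ∧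
      (∀ n, Nonempty ((A n).Aut ≃* G)) := by
  classical
  obtain ⟨H, _, _, ⟨eH⟩⟩ := Finite.exists_type_univ_nonempty_mulEquiv.{v, u} G
  have := Fintype.ofFinite H
  have hK (n : ℕ) : Fintype.card H + 2 ≤ Fintype.card H + 2 + n := Nat.le_add_right _ n
  refine ⟨fun n => ofRel k (rel H (Fintype.card H + 2 + n)),
    fun n => ofRel_isRegular rel_refl wellFounded_rel, fun m n hmn hiso => ?_,
    fun n => ⟨((autMulEquivRelIso rel_refl
      (linearIndependent_relSq rel_refl wellFounded_rel)).trans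
        (mulEquivRelIso (hK n)).symm).trans eH.symm⟩⟩
  have hdim := hiso.finrank_eq
  rw [finrank_ofRel, finrank_ofRel, Fintype.card_prod, Fintype.card_prod, Fintype.card_fin,
    Fintype.card_fin] at hdim
  have hKmn := Nat.eq_of_mul_eq_mul_left Fintype.card_pos hdim
  omega
end

section
/- Let X be a finite-dimensional regular evolution algebra over a field k with natural basis b : ι → X (ι finite). If b̂ : ι → X is any other natural basis of X, then there exist a permutation σ of ι and nonzero scalars λ_i ∈ k such that b̂ i = λ_i • b (σ i) for all i ∈ ι. -/
/-! Writing `x = ∑ xⱼ bⱼ`, a natural basis gives `x * y = ∑ xⱼ yⱼ bⱼ²`, so regularity says the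
squares `bⱼ²` span `X`; as there are `dim X` of them, they form a basis. For a second natural
basis `b'`, the products `b'ᵢ * b'ₗ = 0` (`i ≠ l`) then force the `b`-coordinate vectors of the
`b'ᵢ` to have pairwise disjoint supports. Being nonzero and `dim X` in number, each has exactly
one nonzero coordinate, at positions forming a permutation. -/

theorem Finite.exists_perm_iff_eq_of_unique_left {ι : Type*} [Finite ι] {R : ι → ι → Prop}
    (hex : ∀ i, ∃ j, R i j) (huniq : ∀ i l j, R i j → R l j → i = l) :
    ∃ σ : Equiv.Perm ι, ∀ i j, R i j ↔ j = σ i := by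
  choose f hf using hex
  have hinj : Function.Injective f := fun i l h => huniq i l (f i) (hf i) (h ▸ hf l)
  have hbij : Function.Bijective f := Finite.injective_iff_bijective.mp hinj
  refine ⟨Equiv.ofBijective f hbij, fun i j => ⟨fun hij => ?_, fun h => h ▸ hf i⟩⟩
  obtain ⟨l, rfl⟩ := hbij.2 j
  rw [huniq i l (f l) hij (hf l)]
  rfl

theorem Module.Basis.eq_repr_smul_of_repr_eq_zero {R M ι : Type*} [Semiring R] [AddCommMonoid M]
    [Module R M] (b : Module.Basis ι R M) {x : M} {j₀ : ι} (h : ∀ j, j ≠ j₀ → b.repr x j = 0) :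
    x = b.repr x j₀ • b j₀ := by
  classical
  have hsingle : b.repr x = Finsupp.single j₀ (b.repr x j₀) := by
    ext j
    by_cases hj : j = j₀
    · subst hj; simp
    · simp [h j hj, Finsupp.single_eq_of_ne hj]
  rw [← b.repr_symm_single, ← hsingle, b.repr.symm_apply_apply]

namespace EvolutionAlgebra

def IsNaturalBasis {k X ι : Type*} [CommSemiring k] [AddCommMonoid X] [Module k X]
    (mul : X →ₗ[k] X →ₗ[k] X) (b : Module.Basis ι k X) : Prop :=
  ∀ i j, i ≠ j → mul (b i) (b j) = 0

section CommSemiring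

variable {k X ι : Type*} [CommSemiring k] [AddCommMonoid X] [Module k X] [Fintype ι]
  {mul : X →ₗ[k] X →ₗ[k] X} {b : Module.Basis ι k X}

theorem IsNaturalBasis.mul_basis_left (hb : IsNaturalBasis mul b) (j : ι) (y : X) :
    mul (b j) y = b.repr y j • mul (b j) (b j) := by
  conv_lhs => rw [← b.sum_repr y]
  rw [map_sum, Finset.sum_eq_single j (fun m _ hm => by rw [map_smul, hb j m (Ne.symm hm),
    smul_zero]) (fun h => absurd (Finset.mem_univ j) h), map_smul]

theorem IsNaturalBasis.mul_eq_sum (hb : IsNaturalBasis mul b) (x y : X) :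
    mul x y = ∑ j, (b.repr x j * b.repr y j) • mul (b j) (b j) := by
  conv_lhs => rw [← b.sum_repr x]
  rw [map_sum, LinearMap.sum_apply]
  refine Finset.sum_congr rfl fun j _ => ?_
  rw [map_smul, LinearMap.smul_apply, hb.mul_basis_left, smul_smul]

theorem IsNaturalBasis.span_mul_self_eq_top (hb : IsNaturalBasis mul b)
    (hreg : Submodule.span k {z : X | ∃ x y : X, z = mul x y} = ⊤) :
    Submodule.span k (Set.range fun j => mul (b j) (b j)) = ⊤ := by
  refine eq_top_iff.2 (hreg ▸ Submodule.span_le.2 ?_)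
  rintro _ ⟨x, y, rfl⟩
  rw [hb.mul_eq_sum]
  exact Submodule.sum_mem _ fun j _ => Submodule.smul_mem _ _ (Submodule.subset_span ⟨j, rfl⟩)

end CommSemiring

variable {k X ι : Type*} [CommRing k] [AddCommGroup X] [Module k X] [Fintype ι]
  {mul : X →ₗ[k] X →ₗ[k] X} {b : Module.Basis ι k X}

theorem IsNaturalBasis.linearIndependent_mul_self [Nontrivial k] (hb : IsNaturalBasis mul b)
    (hreg : Submodule.span k {z : X | ∃ x y : X, z = mul x y} = ⊤) :
    LinearIndependent k fun j => mul (b j) (b j) :=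
  linearIndependent_of_top_le_span_of_card_eq_finrank (hb.span_mul_self_eq_top hreg).ge
    (Module.finrank_eq_card_basis b).symm

theorem IsNaturalBasis.repr_mul_repr_eq_zero (hb : IsNaturalBasis mul b)
    (hli : LinearIndependent k fun j => mul (b j) (b j)) {b' : Module.Basis ι k X}
    (hb' : IsNaturalBasis mul b') {i l : ι} (hil : i ≠ l) (j : ι) :
    b.repr (b' i) j * b.repr (b' l) j = 0 := by
  refine Fintype.linearIndependent_iff.1 hli (fun j => b.repr (b' i) j * b.repr (b' l) j) ?_ j
  rw [← hb.mul_eq_sum, hb' i l hil]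

theorem IsNaturalBasis.exists_perm_repr_ne_zero_iff [IsDomain k]
    (hb : IsNaturalBasis mul b) (hreg : Submodule.span k {z : X | ∃ x y : X, z = mul x y} = ⊤)
    {b' : Module.Basis ι k X} (hb' : IsNaturalBasis mul b') :
    ∃ σ : Equiv.Perm ι, ∀ i j, b.repr (b' i) j ≠ 0 ↔ j = σ i := by
  refine Finite.exists_perm_iff_eq_of_unique_left (fun i => ?_) fun i l j hi hl => ?_
  · by_contra! h
    exact b'.ne_zero i (b.repr.map_eq_zero_iff.1 (Finsupp.ext h))
  · by_contra hil
    exact mul_ne_zero hi hl (hb.repr_mul_repr_eq_zero (hb.linearIndependent_mul_self hreg) hb' hil j)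

end EvolutionAlgebra

theorem natural_basis_unique_of_regular_general
    {k X ι : Type*} [Field k] [AddCommGroup X] [Module k X]
    [Fintype ι]
    (mul : X →ₗ[k] X →ₗ[k] X)
    (b : Module.Basis ι k X) (hb : ∀ i j, i ≠ j → mul (b i) (b j) = 0)
    (hreg : Submodule.span k {z : X | ∃ x y : X, z = mul x y} = ⊤)
    (b' : Module.Basis ι k X) (hb' : ∀ i j, i ≠ j → mul (b' i) (b' j) = 0) :
    ∃ (σ : Equiv.Perm ι) (lam : ι → k), (∀ i, lam i ≠ 0) ∧ ∀ i, b' i = lam i • b (σ i) := by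
  obtain ⟨σ, hσ⟩ := EvolutionAlgebra.IsNaturalBasis.exists_perm_repr_ne_zero_iff hb hreg hb'
  refine ⟨σ, fun i => b.repr (b' i) (σ i), fun i => (hσ i (σ i)).2 rfl, fun i => ?_⟩
  exact b.eq_repr_smul_of_repr_eq_zero fun j hj => not_not.1 fun h => hj ((hσ i j).1 h)

/-- **Uniqueness of the natural basis of a regular evolution algebra.**
Let `X` be a finite-dimensional evolution algebra over a field `k` (a finite-dimensional
`k`-vector space with a bilinear commutative multiplication `mul`) which is regular
(the span of all products is everything), and let `b` be a natural basis
(distinct basis vectors multiply to zero).  Then any other natural basis `b'` is obtained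
from `b` by a permutation of the index set and rescaling by nonzero scalars. -/
theorem natural_basis_unique_of_regular
    {k X ι : Type*} [Field k] [AddCommGroup X] [Module k X] [FiniteDimensional k X]
    [Fintype ι]
    (mul : X →ₗ[k] X →ₗ[k] X) (hcomm : ∀ x y : X, mul x y = mul y x)
    (b : Module.Basis ι k X) (hb : ∀ i j, i ≠ j → mul (b i) (b j) = 0)
    (hreg : Submodule.span k {z : X | ∃ x y : X, z = mul x y} = ⊤)
    (b' : Module.Basis ι k X) (hb' : ∀ i j, i ≠ j → mul (b' i) (b' j) = 0) :
    ∃ (σ : Equiv.Perm ι) (lam : ι → k), (∀ i, lam i ≠ 0) ∧ ∀ i, b' i = lam i • b (σ i) :=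
  natural_basis_unique_of_regular_general mul b hb hreg b' hb'
end

section
/- Let X be a finite-dimensional evolution algebra over a field k with natural basis b : ι → X, and let M_B be the structure matrix of X relative to b, i.e., the matrix whose (k,i) entry ω_{ki} is defined by b i * b i = Σ_k ω_{ki} • b k. Then X is regular (X² = X) if and only if M_B is an invertible matrix. -/
/-!
For a natural basis, `x * y = ∑ i, xᵢ yᵢ • bᵢ²`, so `X²` is the span of the squares `bᵢ²`. The
columns of the structure matrix are the coordinates of these squares, so they span `X` exactly
when the matrix is invertible.
-/

namespace LinearMap

variable {R M P ι : Type*} [CommSemiring R] [AddCommMonoid M] [Module R M] [AddCommMonoid P]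
  [Module R P] [Fintype ι] {B : M →ₗ[R] M →ₗ[R] P} {b : Module.Basis ι R M}

theorem IsOrthoᵢ.apply_eq_sum_repr_mul_repr_smul (hB : B.IsOrthoᵢ b) (x y : M) :
    B x y = ∑ i, (b.repr x i * b.repr y i) • B (b i) (b i) := by
  conv_lhs => rw [← b.sum_repr x, ← b.sum_repr y]
  simp only [map_sum, map_smul, LinearMap.sum_apply, LinearMap.smul_apply]
  refine Finset.sum_congr rfl fun i _ => ?_
  rw [Finset.sum_eq_single i (fun j _ hji => by rw [hB hji, smul_zero]) (by simp),
    smul_smul, mul_comm]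

theorem IsOrthoᵢ.span_setOf_apply_eq_span_range_apply_self (hB : B.IsOrthoᵢ b) :
    Submodule.span R {z | ∃ x y, z = B x y} =
      Submodule.span R (Set.range fun i => B (b i) (b i)) := by
  refine le_antisymm (Submodule.span_le.2 ?_) (Submodule.span_mono ?_)
  · rintro _ ⟨x, y, rfl⟩
    rw [hB.apply_eq_sum_repr_mul_repr_smul x y]
    exact Submodule.sum_mem _ fun i _ => Submodule.smul_mem _ _ (Submodule.subset_span ⟨i, rfl⟩)
  · rintro _ ⟨i, rfl⟩
    exact ⟨b i, b i, rfl⟩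

end LinearMap

theorem Module.Basis.span_range_eq_top_iff_isUnit_toMatrix {K V ι : Type*} [Field K]
    [AddCommGroup V] [Module K V] [Fintype ι] [DecidableEq ι] (b : Module.Basis ι K V)
    (v : ι → V) : Submodule.span K (Set.range v) = ⊤ ↔ IsUnit (b.toMatrix v) := by
  have := Module.Finite.of_basis b
  rw [b.toMatrix_eq_toMatrix_constr, LinearMap.isUnit_toMatrix_iff,
    LinearMap.isUnit_iff_range_eq_top, b.constr_range]

theorem regular_iff_structure_matrix_invertible_general
    {k X ι : Type*} [Field k] [AddCommGroup X] [Module k X]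
    [Fintype ι] [DecidableEq ι]
    (mul : X →ₗ[k] X →ₗ[k] X)
    (b : Module.Basis ι k X) (hb : ∀ i j, i ≠ j → mul (b i) (b j) = 0)
    (M : Matrix ι ι k) (hM : ∀ i, mul (b i) (b i) = ∑ j, M j i • b j) :
    Submodule.span k {z : X | ∃ x y : X, z = mul x y} = ⊤ ↔ IsUnit M := by
  have hortho : mul.IsOrthoᵢ b := fun i j hij => hb i j hij
  have hM_eq : M = b.toMatrix fun i => mul (b i) (b i) := by
    ext j i
    rw [Module.Basis.toMatrix_apply, hM, b.repr_sum_self]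
  rw [hortho.span_setOf_apply_eq_span_range_apply_self, hM_eq,
    b.span_range_eq_top_iff_isUnit_toMatrix]

/-- An evolution algebra is regular (`X² = X`) if and only if its structure matrix relative
to a natural basis is invertible.  Here `X` is a finite-dimensional evolution algebra over a
field `k` with natural basis `b : ι → X`, and `M` is the structure matrix: its `(j, i)` entry
`ω_{ji}` is determined by `b i * b i = ∑ j, ω_{ji} • b j`. -/
theorem regular_iff_structure_matrix_invertible
    {k X ι : Type*} [Field k] [AddCommGroup X] [Module k X] [FiniteDimensional k X]
    [Fintype ι] [DecidableEq ι]
    (mul : X →ₗ[k] X →ₗ[k] X) (hcomm : ∀ x y : X, mul x y = mul y x)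
    (b : Module.Basis ι k X) (hb : ∀ i j, i ≠ j → mul (b i) (b j) = 0)
    (M : Matrix ι ι k) (hM : ∀ i, mul (b i) (b i) = ∑ j, M j i • b j) :
    Submodule.span k {z : X | ∃ x y : X, z = mul x y} = ⊤ ↔ IsUnit M :=
  regular_iff_structure_matrix_invertible_general mul b hb M hM
end

section
/- Let G₁ = (V₁, E₁) and G₂ = (V₂, E₂) be finite simple graphs. Then the evolution algebras X(G₁) and X(G₂) over k are isomorphic as k-algebras (i.e., there is a k-linear bijection commuting with multiplication) if and only if the graphs G₁ and G₂ are isomorphic. -/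
/-
An isomorphism `ψ` of evolution algebras whose squares `b_i * b_i` are linearly independent
sends distinct natural basis vectors to vectors of disjoint supports, since their product
vanishes; being bijective, it is therefore monomial: `ψ b_i = α_i b_{τ i}` for a bijection `τ`
of the bases and scalars `α_i ≠ 0`. Comparing `ψ (b_i * b_i)` with `ψ b_i * ψ b_i` shows that
`τ` preserves the relation "`b_j` occurs in `b_i * b_i`". In `X(G)` this relation consists of
a loop at every basis vector and an arrow from each edge to its two endpoints, so the vertices
are the basis vectors without other successors, and two vertices are adjacent iff they are
distinct and share a predecessor. Hence `τ` restricts to a graph isomorphism. Conversely, a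
graph isomorphism permutes the natural bases compatibly with the squares.
-/

open scoped BigOperators

variable (k : Type*) [Field k]

section Defs

variable {V : Type*} [Fintype V] [DecidableEq V]

/-- The square `b i * b i` of the `i`-th natural basis vector of the evolution algebra
`X(G)` attached to a simple graph `G`: for a vertex `v`, `b_v * b_v = b_v`; for an edge
`e = {v, w}`, `b_e * b_e = b_e + b_v + b_w`. -/
noncomputable def graphSq (G : SimpleGraph V) [DecidableRel G.Adj] :
    (V ⊕ ↥G.edgeSet) → (V ⊕ ↥G.edgeSet) → k
  | Sum.inl v => Pi.single (Sum.inl v) 1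
  | Sum.inr e => Pi.single (Sum.inr e) 1 +
      ∑ v ∈ Finset.univ.filter (· ∈ (e : Sym2 V)), Pi.single (Sum.inl v) 1

/-- The multiplication of the evolution algebra `X(G)` attached to a simple graph `G`,
as a `k`-bilinear map on the space of functions `(V ⊕ G.edgeSet) → k`.  Distinct natural
basis vectors multiply to zero, and the squares are given by `graphSq`. -/
noncomputable def graphMul (G : SimpleGraph V) [DecidableRel G.Adj] :
    ((V ⊕ ↥G.edgeSet) → k) →ₗ[k] ((V ⊕ ↥G.edgeSet) → k) →ₗ[k] ((V ⊕ ↥G.edgeSet) → k) :=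
  LinearMap.mk₂ k (fun x y => ∑ i, (x i * y i) • graphSq k G i)
    (by intro x x' y; simp [add_mul, add_smul, Finset.sum_add_distrib])
    (by intro c x y; simp [Finset.smul_sum, smul_smul, mul_assoc])
    (by intro x y y'; simp [mul_add, add_smul, Finset.sum_add_distrib])
    (by intro c x y; simp [Finset.smul_sum, smul_smul, mul_assoc, mul_left_comm])

end Defs

section MonomialLinearEquiv

variable {k} {ι ι' : Type*} [Fintype ι] [DecidableEq ι] [DecidableEq ι']

theorem LinearEquiv.exists_apply_single_ne_zero (ψ : (ι → k) ≃ₗ[k] (ι' → k)) (l : ι') :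
    ∃ i, ψ (Pi.single i 1) l ≠ 0 := by
  by_contra! h
  have : LinearMap.proj l ∘ₗ ψ.toLinearMap = 0 :=
    (Pi.basisFun k ι).ext fun i => by simpa using h i
  simpa using LinearMap.congr_fun this (ψ.symm (Pi.single l 1))

theorem LinearEquiv.exists_apply_single_eq_single [Fintype ι'] (ψ : (ι → k) ≃ₗ[k] (ι' → k))
    (h : ∀ i j, i ≠ j → ∀ l, ψ (Pi.single i 1) l * ψ (Pi.single j 1) l = 0) :
    ∃ (τ : ι ≃ ι') (α : ι → k), (∀ i, α i ≠ 0) ∧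
      ∀ i, ψ (Pi.single i 1) = Pi.single (τ i) (α i) := by
  choose σ hσ using ψ.exists_apply_single_ne_zero
  have hσ_unique (i : ι) (l : ι') (hil : ψ (Pi.single i 1) l ≠ 0) : i = σ l := by
    by_contra hne
    exact mul_ne_zero hil (hσ l) (h i (σ l) hne l)
  have hσ_surj : σ.Surjective := fun i => by
    have : ψ (Pi.single i 1) ≠ 0 := by simp
    obtain ⟨l, hl⟩ := Function.ne_iff.mp this
    exact ⟨l, (hσ_unique i l hl).symm⟩
  have hcard : Fintype.card ι' = Fintype.card ι := by
    simpa [Module.finrank_fintype_fun_eq_card] using ψ.finrank_eq.symm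
  let τ := (Equiv.ofBijective σ
    ((Fintype.bijective_iff_surjective_and_card σ).mpr ⟨hσ_surj, hcard⟩)).symm
  have hστ (i : ι) : σ (τ i) = i := Equiv.ofBijective_apply_symm_apply _ _ i
  have hτσ (l : ι') : τ (σ l) = l := Equiv.ofBijective_symm_apply_apply _ _ l
  refine ⟨τ, fun i => ψ (Pi.single i 1) (τ i), fun i => ?_, fun i => ?_⟩
  · simpa [hστ] using hσ (τ i)
  · ext l
    by_cases hl : l = τ i
    · simp [hl]
    · rw [Pi.single_eq_of_ne hl]
      by_contra hil
      exact hl (by rw [hσ_unique i l hil, hτσ])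

theorem LinearMap.apply_eq_mul_of_apply_single_eq_single (ψ : (ι → k) →ₗ[k] (ι' → k))
    (τ : ι ≃ ι') (α : ι → k) (hψ : ∀ i, ψ (Pi.single i 1) = Pi.single (τ i) (α i))
    (x : ι → k) (j : ι) : ψ x (τ j) = α j * x j := by
  have : LinearMap.proj (τ j) ∘ₗ ψ = α j • LinearMap.proj j :=
    (Pi.basisFun k ι).ext fun i => by
      by_cases hij : i = j
      · simp [hψ, hij]
      · simp [hψ, hij, τ.injective.eq_iff]
  exact LinearMap.congr_fun this x

end MonomialLinearEquiv

section EvolutionAlgebra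

variable {ι ι' : Type*} [Fintype ι] [Fintype ι']

noncomputable def evolutionMul (sq : ι → ι → k) : (ι → k) →ₗ[k] (ι → k) →ₗ[k] (ι → k) :=
  LinearMap.mk₂ k (fun x y => ∑ i, (x i * y i) • sq i)
    (by intro x x' y; simp [add_mul, add_smul, Finset.sum_add_distrib])
    (by intro c x y; simp [Finset.smul_sum, smul_smul, mul_assoc])
    (by intro x y y'; simp [mul_add, add_smul, Finset.sum_add_distrib])
    (by intro c x y; simp [Finset.smul_sum, smul_smul, mul_left_comm])

variable {k}

theorem evolutionMul_apply (sq : ι → ι → k) (x y : ι → k) :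
    evolutionMul k sq x y = ∑ i, (x i * y i) • sq i := rfl

theorem evolutionMul_single_single [DecidableEq ι] (sq : ι → ι → k) (i j : ι) (a b : k) :
    evolutionMul k sq (Pi.single i a) (Pi.single j b) = if i = j then (a * b) • sq i else 0 := by
  rw [evolutionMul_apply, Finset.sum_eq_single i]
  · split_ifs with h <;> simp [h]
  · intro l _ hl; simp [hl]
  · simp

theorem evolutionMul_eq_zero_iff {sq : ι → ι → k} (hsq : LinearIndependent k sq) (x y : ι → k) :
    evolutionMul k sq x y = 0 ↔ ∀ i, x i * y i = 0 := by
  refine ⟨fun h => Fintype.linearIndependent_iff.mp hsq _ h, fun h => ?_⟩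
  simp [evolutionMul_apply, h]

theorem evolutionMul_funCongrLeft (sq : ι → ι → k) (sq' : ι' → ι' → k) (τ : ι ≃ ι')
    (hτ : ∀ i j, sq' (τ i) (τ j) = sq i j) (x y : ι → k) :
    LinearEquiv.funCongrLeft k k τ.symm (evolutionMul k sq x y) =
      evolutionMul k sq' (LinearEquiv.funCongrLeft k k τ.symm x)
        (LinearEquiv.funCongrLeft k k τ.symm y) := by
  ext j
  simp only [LinearEquiv.funCongrLeft_apply, LinearMap.funLeft_apply, evolutionMul_apply,
    Finset.sum_apply, Pi.smul_apply, smul_eq_mul]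
  rw [← τ.sum_comp]
  simp [← hτ]

variable [DecidableEq ι] [DecidableEq ι']

theorem exists_equiv_sq_ne_zero_iff_of_map_evolutionMul {sq : ι → ι → k} {sq' : ι' → ι' → k}
    (hsq' : LinearIndependent k sq') (ψ : (ι → k) ≃ₗ[k] (ι' → k))
    (hψ : ∀ x y, ψ (evolutionMul k sq x y) = evolutionMul k sq' (ψ x) (ψ y)) :
    ∃ τ : ι ≃ ι', ∀ i j, sq' (τ i) (τ j) ≠ 0 ↔ sq i j ≠ 0 := by
  have horth (i j : ι) (hij : i ≠ j) (l : ι') :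
      ψ (Pi.single i 1) l * ψ (Pi.single j 1) l = 0 := by
    revert l
    rw [← evolutionMul_eq_zero_iff hsq', ← hψ, evolutionMul_single_single, if_neg hij,
      map_zero]
  obtain ⟨τ, α, hα, hτ⟩ := ψ.exists_apply_single_eq_single horth
  have hcoord (x : ι → k) (j : ι) : ψ x (τ j) = α j * x j :=
    ψ.toLinearMap.apply_eq_mul_of_apply_single_eq_single τ α hτ x j
  have hsq (i j : ι) : α j * sq i j = (α i * α i) * sq' (τ i) (τ j) := by
    have := congr_fun (hψ (Pi.single i 1) (Pi.single i 1)) (τ j)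
    rwa [evolutionMul_single_single, if_pos rfl, one_mul, one_smul, hcoord, hτ,
      evolutionMul_single_single, if_pos rfl, Pi.smul_apply, smul_eq_mul] at this
  refine ⟨τ, fun i j => ?_⟩
  simpa [hα] using (congrArg (· ≠ 0) (hsq i j)).symm

end EvolutionAlgebra

namespace SimpleGraph

variable {V W : Type*} (G : SimpleGraph V) {H : SimpleGraph W}

/-- `G.SqSupport i j` says that `b_j` occurs in `b_i * b_i` in `X(G)`. -/
def SqSupport : V ⊕ G.edgeSet → V ⊕ G.edgeSet → Prop
  | Sum.inl v, j => j = Sum.inl v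
  | Sum.inr e, j => j = Sum.inr e ∨ ∃ v ∈ (e : Sym2 V), j = Sum.inl v

variable {G}

theorem sqSupport_inr_right_iff (i : V ⊕ G.edgeSet) (e : G.edgeSet) :
    G.SqSupport i (Sum.inr e) ↔ i = Sum.inr e := by
  cases i <;> simp [SqSupport, eq_comm]

theorem isLeft_iff_forall_sqSupport (i : V ⊕ G.edgeSet) :
    i.isLeft ↔ ∀ j, G.SqSupport i j → j = i := by
  rcases i with v | e
  · simp [SqSupport]
  · obtain ⟨v, hv⟩ : ∃ v, v ∈ (e : Sym2 V) := ⟨_, Sym2.out_fst_mem _⟩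
    simp only [Sum.isLeft_inr, Bool.false_eq_true, false_iff, not_forall]
    exact ⟨Sum.inl v, Or.inr ⟨v, hv, rfl⟩, Sum.inl_ne_inr⟩

theorem adj_iff_exists_sqSupport (a b : V) :
    G.Adj a b ↔ a ≠ b ∧ ∃ i, G.SqSupport i (Sum.inl a) ∧ G.SqSupport i (Sum.inl b) := by
  refine ⟨fun h => ⟨h.ne, Sum.inr ⟨s(a, b), h⟩, by simp [SqSupport]⟩, ?_⟩
  rintro ⟨hab, c | ⟨e, he⟩, ha, hb⟩
  · simp only [SqSupport, Sum.inl.injEq] at ha hb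
    exact absurd (ha.trans hb.symm) hab
  · simp [SqSupport] at ha hb
    rwa [← mem_edgeSet, ← (Sym2.mem_and_mem_iff hab).mp ⟨ha, hb⟩]

theorem nonempty_iso_of_sqSupport_iff (τ : V ⊕ G.edgeSet ≃ W ⊕ H.edgeSet)
    (hτ : ∀ i j, H.SqSupport (τ i) (τ j) ↔ G.SqSupport i j) : Nonempty (G ≃g H) := by
  have hleft (i : V ⊕ G.edgeSet) : i.isLeft ↔ (τ i).isLeft := by
    rw [isLeft_iff_forall_sqSupport, isLeft_iff_forall_sqSupport, τ.surjective.forall]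
    simp only [hτ, τ.apply_eq_iff_eq]
  let f : V ≃ W := Equiv.sumIsLeft.symm.trans ((τ.subtypeEquiv hleft).trans Equiv.sumIsLeft)
  have hf (v : V) : τ (Sum.inl v) = Sum.inl (f v) := by simp [f]
  refine ⟨⟨f, fun {a b} => ?_⟩⟩
  rw [adj_iff_exists_sqSupport, adj_iff_exists_sqSupport, ← hf, ← hf, f.injective.ne_iff,
    τ.surjective.exists]
  simp only [hτ]

theorem Iso.sqSupport_sumCongr_iff (φ : G ≃g H) (i j : V ⊕ G.edgeSet) :
    H.SqSupport (Equiv.sumCongr φ.toEquiv φ.mapEdgeSet i)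
      (Equiv.sumCongr φ.toEquiv φ.mapEdgeSet j) ↔ G.SqSupport i j := by
  rcases i with v | e <;> rcases j with w | f <;>
    simp [SqSupport, Sym2.mem_map, φ.injective.eq_iff,
      (Hom.mapEdgeSet.injective φ.toRelEmbedding.toRelHom φ.injective).eq_iff]

end SimpleGraph

section GraphEvolutionAlgebra

variable {k} {V : Type*} [Fintype V] [DecidableEq V] (G : SimpleGraph V) [DecidableRel G.Adj]

open Classical in
theorem graphSq_apply (i j : V ⊕ G.edgeSet) :
    graphSq k G i j = if G.SqSupport i j then 1 else 0 := by
  rcases i with v | e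
  · simp only [graphSq, SimpleGraph.SqSupport, Pi.single_apply]
    congr
  · rcases j with w | f <;>
      simp [graphSq, SimpleGraph.SqSupport, Pi.single_apply, Finset.sum_apply]

theorem graphSq_ne_zero_iff (i j : V ⊕ G.edgeSet) :
    graphSq k G i j ≠ 0 ↔ G.SqSupport i j := by
  simp [graphSq_apply]

theorem linearIndependent_graphSq : LinearIndependent k (graphSq k G) := by
  refine Fintype.linearIndependent_iff.mpr fun d hd => ?_
  have hcoord (j : V ⊕ G.edgeSet) : ∑ i, d i * graphSq k G i j = 0 := by
    simpa using congr_fun hd j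
  have hedge (e : G.edgeSet) : d (Sum.inr e) = 0 := by
    simpa [graphSq_apply, SimpleGraph.sqSupport_inr_right_iff] using hcoord (Sum.inr e)
  rintro (v | e)
  · simpa [graphSq_apply, Fintype.sum_sum_type, hedge, SimpleGraph.SqSupport] using
      hcoord (Sum.inl v)
  · exact hedge e

theorem graphMul_eq_evolutionMul : graphMul k G = evolutionMul k (graphSq k G) := rfl

end GraphEvolutionAlgebra

/-- Two finite simple graphs have isomorphic evolution algebras (as `k`-algebras, i.e.
via a `k`-linear bijection commuting with the multiplications) if and only if the graphs
themselves are isomorphic. -/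
theorem graphEvolutionAlgebra_iso_iff {V₁ V₂ : Type*} [Fintype V₁] [DecidableEq V₁]
    [Fintype V₂] [DecidableEq V₂]
    (G₁ : SimpleGraph V₁) (G₂ : SimpleGraph V₂)
    [DecidableRel G₁.Adj] [DecidableRel G₂.Adj] :
    (∃ ψ : ((V₁ ⊕ ↥G₁.edgeSet) → k) ≃ₗ[k] ((V₂ ⊕ ↥G₂.edgeSet) → k),
        ∀ x y : (V₁ ⊕ ↥G₁.edgeSet) → k,
          ψ (graphMul k G₁ x y) = graphMul k G₂ (ψ x) (ψ y)) ↔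
      Nonempty (G₁ ≃g G₂) := by
  simp only [graphMul_eq_evolutionMul]
  constructor
  · rintro ⟨ψ, hψ⟩
    obtain ⟨τ, hτ⟩ :=
      exists_equiv_sq_ne_zero_iff_of_map_evolutionMul (linearIndependent_graphSq G₂) ψ hψ
    exact SimpleGraph.nonempty_iso_of_sqSupport_iff τ fun i j => by
      simpa only [graphSq_ne_zero_iff] using hτ i j
  · rintro ⟨φ⟩
    refine ⟨_, evolutionMul_funCongrLeft _ _ (Equiv.sumCongr φ.toEquiv φ.mapEdgeSet) ?_⟩
    intro i j
    classical
    simp only [graphSq_apply]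
    exact if_congr (φ.sqSupport_sumCongr_iff i j) rfl rfl
end

section
/- For every finite group G there exist infinitely many pairwise non-isomorphic finite connected simple graphs Γ such that the automorphism group of Γ is isomorphic to G. -/
/-!
Frucht's construction, phrased as a voltage lift. Given non-identity elements `s i` generating
`H`, the base graph has a hub, vertices `gen i` and `mark i`, and three paths of lengths `m + 1`,
`m + 2`, `m + 3` hanging off the hub; its lift to `H × Base` joins `(g, a)` to `(g * t, b)`
whenever `t` is a voltage on the arc from `a` to `b`, so left translations are automorphisms.
Conversely, degrees single out the hub fibre and every `gen` and `mark` fibre, and walking along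
the legs, which have different lengths, shows that every leg fibre is preserved as well. The
triangles `hub – mark i – gen i` of voltage `1` then force an automorphism to act on each fibre by
the permutation `τ` it induces on the hub fibre, and the edges `(g, hub) – (g * s i, gen i)` give
`τ (g * s i) = τ g * s i`, so `τ` is a left translation. The lifts are connected since the `s i`
generate `H`, and `m` changes their number of vertices.
-/

open Finset SimpleGraph Function

theorem Fin.eq_id_of_injective_of_le {r : ℕ} {f : Fin r → Fin r} (hf : Injective f)
    (hle : ∀ k, k ≤ f k) : f = id := by
  have hsum : ∑ k : Fin r, (k : ℕ) = ∑ k, (f k : ℕ) :=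
    ((Equiv.ofBijective f hf.bijective_of_finite).sum_comp fun k => (k : ℕ)).symm
  rw [sum_eq_sum_iff_of_le fun k _ => Fin.le_iff_val_le_val.1 (hle k)] at hsum
  exact funext fun k => (Fin.ext (hsum k (mem_univ k))).symm

theorem Fin.sum_ite_eq_ite_lt {n : ℕ} (i : Fin n) (a b : ℕ) :
    ∑ j, (if i = j then a else if i < j then b else 0) = a + b * (n - 1 - i) := by
  have : ∀ j, (if i = j then a else if i < j then b else 0) =
      (if i = j then a else 0) + if i < j then b else 0 := fun j => by
    split_ifs <;> simp_all
  simp [this, sum_add_distrib, sum_ite, filter_lt_eq_Ioi, mul_comm]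

theorem Fin.sum_ite_eq_ite_gt {n : ℕ} (i : Fin n) (a b : ℕ) :
    ∑ j, (if j = i then a else if j < i then b else 0) = a + b * i := by
  have : ∀ j, (if j = i then a else if j < i then b else 0) =
      (if i = j then a else 0) + if j < i then b else 0 := fun j => by
    split_ifs <;> simp_all [eq_comm]
  simp [this, sum_add_distrib, sum_ite, filter_gt_eq_Iio, mul_comm]

namespace Frucht

structure Voltage (H B : Type*) [Group H] where
  volt : B → B → Finset H
  inv_mem_volt {a b : B} {t : H} : t ∈ volt a b → t⁻¹ ∈ volt b a
  one_notMem_volt (a : B) : 1 ∉ volt a a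

namespace Voltage

variable {H B : Type*} [Group H] (V : Voltage H B)

def lift : SimpleGraph (H × B) where
  Adj x y := x.1⁻¹ * y.1 ∈ V.volt x.2 y.2
  symm := ⟨fun _ _ h => by simpa using V.inv_mem_volt h⟩
  loopless := ⟨fun x h => V.one_notMem_volt x.2 (by simpa using h)⟩

@[simp] lemma lift_adj {x y : H × B} : V.lift.Adj x y ↔ x.1⁻¹ * y.1 ∈ V.volt x.2 y.2 := Iff.rfl

instance [DecidableEq H] : DecidableRel V.lift.Adj :=
  fun x y => inferInstanceAs (Decidable (x.1⁻¹ * y.1 ∈ V.volt x.2 y.2))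

lemma lift_adj_iff_of_volt_eq_one {a b : B} (hab : V.volt a b = {1}) {g g' : H} :
    V.lift.Adj (g, a) (g', b) ↔ g = g' := by
  simp [hab, inv_mul_eq_one]

def mulLeftIso (u : H) : V.lift ≃g V.lift where
  toEquiv := (Equiv.mulLeft u).prodCongr (Equiv.refl B)
  map_rel_iff' {x y} := by simp [mul_assoc]

@[simp] lemma mulLeftIso_apply (u : H) (x : H × B) : V.mulLeftIso u x = (u * x.1, x.2) := rfl

def mulLeftHom : H →* (V.lift ≃g V.lift) where
  toFun := V.mulLeftIso
  map_one' := by ext <;> simp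
  map_mul' u v := by ext <;> simp [mul_assoc]

@[simp] lemma mulLeftHom_apply (u : H) : V.mulLeftHom u = V.mulLeftIso u := rfl

noncomputable def autMulEquivOfRigid [Nonempty B]
    (hφ : ∀ φ : V.lift ≃g V.lift, ∃ u, ∀ x, φ x = (u * x.1, x.2)) :
    (V.lift ≃g V.lift) ≃* H :=
  (MulEquiv.ofBijective V.mulLeftHom ⟨fun u v huv => by
    obtain ⟨b⟩ := ‹Nonempty B›
    simpa using congrArg (fun φ : V.lift ≃g V.lift => (φ (1, b)).1) huv,
    fun φ => (hφ φ).imp fun u hu => RelIso.ext fun x => (hu x).symm⟩).symm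

section Degree

variable [Fintype B]

def deg (a : B) : ℕ := ∑ b, #(V.volt a b)

variable [Fintype H] [DecidableEq H]

lemma degree_lift (x : H × B) : V.lift.degree x = V.deg x.2 := by
  have : V.lift.neighborFinset x =
      (univ.sigma fun b => V.volt x.2 b).map
        ⟨fun p => (x.1 * p.2, p.1), fun p q h => by
          simp only [Prod.mk.injEq, mul_right_inj] at h; exact Sigma.ext h.2 (heq_of_eq h.1)⟩ := by
    ext ⟨g, b⟩
    simp only [mem_neighborFinset, lift_adj, mem_map, mem_sigma, mem_univ, true_and]
    refine ⟨fun h => ⟨⟨b, x.1⁻¹ * g⟩, h, Prod.ext (mul_inv_cancel_left _ _) rfl⟩, ?_⟩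
    rintro ⟨⟨b', t⟩, ht, h⟩
    obtain ⟨rfl, rfl⟩ := Prod.mk.inj h
    simpa using ht
  rw [← card_neighborFinset_eq_degree, this, card_map, card_sigma, deg]

lemma deg_snd_apply (φ : V.lift ≃g V.lift) (x : H × B) : V.deg (φ x).2 = V.deg x.2 := by
  rw [← degree_lift, ← degree_lift, φ.degree_eq]

end Degree

variable {V}

lemma snd_eq_of_forall_snd_apply {a : B} (h : ∀ (ψ : V.lift ≃g V.lift) (g : H), (ψ (g, a)).2 = a)
    (φ : V.lift ≃g V.lift) {x : H × B} (hx : (φ x).2 = a) : x.2 = a := by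
  simpa [← hx] using h φ.symm (φ x).1

lemma apply_eq_of_volt_eq_one (φ : V.lift ≃g V.lift) {a b : B} (hab : V.volt a b = {1})
    {g h : H} (ha : φ (g, a) = (h, a)) (hb : (φ (g, b)).2 = b) : φ (g, b) = (h, b) := by
  have hadj := φ.map_adj_iff.2 ((V.lift_adj_iff_of_volt_eq_one hab (g := g)).2 rfl)
  rw [ha] at hadj
  generalize φ (g, b) = y at hadj hb ⊢
  obtain ⟨y, b'⟩ := y
  obtain rfl : b' = b := hb
  rw [(V.lift_adj_iff_of_volt_eq_one hab).1 hadj]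

variable (V)

lemma connected_lift (c : B) {S : Set H} (hS : Subgroup.closure S = ⊤)
    (hgen : ∀ t ∈ S, V.lift.Reachable (1, c) (t, c))
    (hbase : ∀ b, V.lift.Reachable (1, b) (1, c)) : V.lift.Connected := by
  have translate : ∀ (u : H) {x y : H × B}, V.lift.Reachable x y →
      V.lift.Reachable (u * x.1, x.2) (u * y.1, y.2) :=
    fun u _ _ h => h.map (V.mulLeftIso u).toHom
  have hub : ∀ g, V.lift.Reachable (1, c) (g, c) := fun g => by
    induction (hS ▸ Subgroup.mem_top g : g ∈ Subgroup.closure S) using Subgroup.closure_induction with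
    | mem t ht => exact hgen t ht
    | one => rfl
    | mul x y _ _ hx hy => exact hx.trans (by simpa using translate x hy)
    | inv x _ hx => simpa using (translate x⁻¹ hx).symm
  have hx : ∀ z : H × B, V.lift.Reachable z (1, c) := fun z =>
    (by simpa using translate z.1 (hbase z.2) : V.lift.Reachable z (z.1, c)).trans (hub z.1).symm
  have : Nonempty (H × B) := ⟨(1, c)⟩
  exact Connected.mk fun x y => (hx x).trans (hx y).symm

end Voltage

inductive Base (n m : ℕ)
  | hub
  | gen (i : Fin n)
  | mark (i : Fin n)
  | leg (k : Fin 3) (j : ℕ) (hj : j < m + k + 1)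

namespace Base

variable {n m : ℕ}

def equivSum : Base n m ≃ Unit ⊕ Fin n ⊕ Fin n ⊕ Σ k : Fin 3, Fin (m + k + 1) where
  toFun
    | hub => .inl ()
    | gen i => .inr (.inl i)
    | mark i => .inr (.inr (.inl i))
    | leg k j hj => .inr (.inr (.inr ⟨k, j, hj⟩))
  invFun
    | .inl () => hub
    | .inr (.inl i) => gen i
    | .inr (.inr (.inl i)) => mark i
    | .inr (.inr (.inr ⟨k, j⟩)) => leg k j j.2
  left_inv b := by cases b <;> rfl
  right_inv p := by rcases p with _ | i | i | ⟨k, j⟩ <;> rfl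

instance : Fintype (Base n m) := Fintype.ofEquiv _ equivSum.symm

instance : Nonempty (Base n m) := ⟨hub⟩

lemma card_eq : Fintype.card (Base n m) = 2 * n + 3 * m + 7 := by
  simp [Fintype.card_congr equivSum, Fin.sum_univ_three]
  ring

lemma sum_eq {M : Type*} [AddCommMonoid M] (f : Base n m → M) :
    ∑ b, f b = f hub + ∑ i, f (gen i) + ∑ i, f (mark i) +
      ∑ k : Fin 3, ∑ j : Fin (m + k + 1), f (leg k j j.2) := by
  rw [← equivSum.symm.sum_comp]
  simp [Fintype.sum_sum_type, Fintype.sum_sigma, add_assoc]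
  rfl

end Base

open Base

variable {H : Type*} [Group H] [DecidableEq H] {n : ℕ} (s : Fin n → H) (m : ℕ)

/-- The edges `gen i – mark j` for `i < j` only serve to give all `gen` and `mark` vertices
distinct degrees. -/
def volt : Base n m → Base n m → Finset H
  | hub, gen i => {1, s i}
  | gen i, hub => {1, (s i)⁻¹}
  | hub, mark _ => {1}
  | mark _, hub => {1}
  | gen i, mark j => if i = j then {1} else if i < j then {1, s j} else ∅
  | mark j, gen i => if i = j then {1} else if i < j then {1, (s j)⁻¹} else ∅
  | hub, leg _ j _ => if j = 0 then {1} else ∅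
  | leg _ j _, hub => if j = 0 then {1} else ∅
  | leg k j _, leg k' j' _ => if k = k' ∧ (j' = j + 1 ∨ j = j' + 1) then {1} else ∅
  | _, _ => ∅

def voltage : Voltage H (Base n m) where
  volt := volt s m
  inv_mem_volt {a b t} h := by
    cases a <;> cases b <;> dsimp only [volt] at h ⊢ <;> (try split_ifs at h ⊢) <;>
      simp only [mem_insert, mem_singleton, notMem_empty] at h ⊢ <;> grind [inv_one, inv_inv]
  one_notMem_volt a := by cases a <;> dsimp only [volt] <;> simp

variable {s m}

@[simp] lemma voltage_volt : (voltage s m).volt = volt s m := rfl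

lemma lift_adj_hub_leg {g g' : H} {k : Fin 3} {j : ℕ} {hj : j < m + k + 1} :
    (voltage s m).lift.Adj (g, hub) (g', leg k j hj) ↔ g = g' ∧ j = 0 := by
  simp only [Voltage.lift_adj, voltage_volt, volt]
  split_ifs <;> simp [*, inv_mul_eq_one]

lemma lift_adj_leg_leg {g g' : H} {k k' : Fin 3} {j j' : ℕ} {hj : j < m + k + 1}
    {hj' : j' < m + k' + 1} :
    (voltage s m).lift.Adj (g, leg k j hj) (g', leg k' j' hj') ↔
      g = g' ∧ k = k' ∧ (j' = j + 1 ∨ j = j' + 1) := by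
  simp only [Voltage.lift_adj, voltage_volt, volt]
  split_ifs <;> simp [*, inv_mul_eq_one]

lemma deg_leg_le (k : Fin 3) (j : ℕ) (hj : j < m + k + 1) :
    (voltage s m).deg (leg k j hj) ≤ 2 := by
  classical
  let prev : Base n m := if j = 0 then hub else leg k (j - 1) (by omega)
  let next : Base n m := if h : j + 1 < m + k + 1 then leg k (j + 1) h else hub
  have hsub : ∀ b, volt s m (leg k j hj) b ⊆ {1} := by
    intro b; cases b <;> dsimp only [volt] <;> (try split_ifs) <;> simp
  have hsupp : ∀ b ∉ ({prev, next} : Finset (Base n m)), volt s m (leg k j hj) b = ∅ := by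
    intro b hb
    simp only [mem_insert, mem_singleton, not_or, prev, next] at hb
    cases b <;> dsimp only [volt] <;> split_ifs with h <;> try rfl
    · simp [h] at hb
    · obtain ⟨rfl, rfl | rfl⟩ := h <;> simp_all
  calc (voltage s m).deg (leg k j hj)
      = ∑ b ∈ {prev, next}, #(volt s m (leg k j hj) b) :=
        (sum_subset (subset_univ _) fun b _ hb => by simp [hsupp b hb]).symm
    _ ≤ ∑ _b ∈ ({prev, next} : Finset (Base n m)), 1 :=
        sum_le_sum fun b _ => (card_le_card (hsub b)).trans (card_singleton _).le
    _ ≤ 2 := by simpa using card_le_two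

section Rigidity

variable (hs : ∀ i, s i ≠ 1)
include hs

lemma deg_hub : (voltage s m).deg hub = 3 * n + 3 := by
  simp only [Voltage.deg, Base.sum_eq, voltage_volt]
  dsimp only [volt]
  simp [card_pair (hs _).symm, Fin.sum_univ_succ]
  ring

lemma deg_gen (i : Fin n) : (voltage s m).deg (gen i) = 2 * (n - i) + 1 := by
  simp only [Voltage.deg, Base.sum_eq, voltage_volt]
  dsimp only [volt]
  simp [card_pair (hs _).symm, card_pair (inv_ne_one.2 (hs _)).symm, apply_ite card,
    Fin.sum_ite_eq_ite_lt]
  omega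

lemma deg_mark (i : Fin n) : (voltage s m).deg (mark i) = 2 * i + 2 := by
  simp only [Voltage.deg, Base.sum_eq, voltage_volt]
  dsimp only [volt]
  simp [card_pair (inv_ne_one.2 (hs _)).symm, apply_ite card, Fin.sum_ite_eq_ite_gt]
  omega

lemma eq_hub_of_deg_eq {b : Base n m} (h : (voltage s m).deg b = 3 * n + 3) : b = hub := by
  cases b with
  | hub => rfl
  | gen i => have := i.2; rw [deg_gen hs] at h; omega
  | mark i => have := i.2; rw [deg_mark hs] at h; omega
  | leg k j hj => have := deg_leg_le (s := s) k j hj; omega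

lemma eq_gen_of_deg_eq {b : Base n m} {i : Fin n} (h : (voltage s m).deg b = 2 * (n - i) + 1) :
    b = gen i := by
  have := i.2
  cases b with
  | hub => rw [deg_hub hs] at h; omega
  | gen i' => have := i'.2; rw [deg_gen hs] at h; rw [Fin.ext_iff.2 (by omega : (i' : ℕ) = i)]
  | mark i' => have := i'.2; rw [deg_mark hs] at h; omega
  | leg k j hj => have := deg_leg_le (s := s) k j hj; omega

lemma eq_mark_of_deg_eq {b : Base n m} {i : Fin n} (h : (voltage s m).deg b = 2 * i + 2) :
    b = mark i ∨ ∃ k j hj, b = leg k j hj := by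
  have := i.2
  cases b with
  | hub => rw [deg_hub hs] at h; omega
  | gen i' => have := i'.2; rw [deg_gen hs] at h; omega
  | mark i' => rw [deg_mark hs] at h; exact .inl (by rw [Fin.ext_iff.2 (by omega : (i' : ℕ) = i)])
  | leg k j hj => exact .inr ⟨k, j, hj, rfl⟩

variable [Fintype H] (φ : (voltage s m).lift ≃g (voltage s m).lift)

lemma snd_apply_hub (g : H) : (φ (g, hub)).2 = hub :=
  eq_hub_of_deg_eq hs (((voltage s m).deg_snd_apply φ _).trans (deg_hub hs))

lemma snd_apply_gen (g : H) (i : Fin n) : (φ (g, gen i)).2 = gen i :=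
  eq_gen_of_deg_eq hs (((voltage s m).deg_snd_apply φ _).trans (deg_gen hs i))

lemma snd_apply_mark (g : H) (i : Fin n) : (φ (g, mark i)).2 = mark i := by
  refine (eq_mark_of_deg_eq hs
    (((voltage s m).deg_snd_apply φ _).trans (deg_mark hs i))).resolve_right ?_
  rintro ⟨k, j, hj, hleg⟩
  -- `mark i` has a neighbour in the `gen i` fibre, a leg vertex has none
  have hadj := φ.map_adj_iff.2 (show (voltage s m).lift.Adj (g, mark i) (g, gen i) by simp [volt])
  rw [← Prod.mk.eta (p := φ (g, mark i)), ← Prod.mk.eta (p := φ (g, gen i)), hleg,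
    snd_apply_gen hs] at hadj
  simp [volt] at hadj

lemma apply_hub (g : H) : φ (g, hub) = ((φ (g, hub)).1, hub) :=
  Prod.ext rfl (snd_apply_hub hs φ g)

lemma apply_mark (g : H) (i : Fin n) : φ (g, mark i) = ((φ (g, hub)).1, mark i) :=
  Voltage.apply_eq_of_volt_eq_one φ rfl (apply_hub hs φ g) (snd_apply_mark hs φ g i)

lemma apply_gen (g : H) (i : Fin n) : φ (g, gen i) = ((φ (g, hub)).1, gen i) :=
  Voltage.apply_eq_of_volt_eq_one φ (by simp [volt]) (apply_mark hs φ g i)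
    (snd_apply_gen hs φ g i)

lemma exists_apply_leg_eq_leg (g : H) (k : Fin 3) (j : ℕ) (hj : j < m + k + 1) :
    ∃ h k' j' hj', φ (g, leg k j hj) = (h, leg k' j' hj') := by
  generalize hx : φ (g, leg k j hj) = x
  obtain ⟨h, b⟩ := x
  have hb : (φ (g, leg k j hj)).2 = b := by rw [hx]
  cases b with
  | hub => simpa using Voltage.snd_eq_of_forall_snd_apply (snd_apply_hub hs) φ hb
  | gen i => simpa using Voltage.snd_eq_of_forall_snd_apply (snd_apply_gen hs · · i) φ hb
  | mark i => simpa using Voltage.snd_eq_of_forall_snd_apply (snd_apply_mark hs · · i) φ hb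
  | leg k' j' hj' => exact ⟨h, k', j', hj', rfl⟩

lemma exists_apply_leg (g : H) (k : Fin 3) :
    ∃ k' : Fin 3, ∀ j (hj : j < m + k + 1), ∃ hj' : j < m + k' + 1,
      φ (g, leg k j hj) = ((φ (g, hub)).1, leg k' j hj') := by
  obtain ⟨h₀, k', j₀, hj₀, he₀⟩ := exists_apply_leg_eq_leg hs φ g k 0 (by omega)
  have hadj₀ := φ.map_adj_iff.2
    (lift_adj_hub_leg.2 ⟨rfl, rfl⟩ : (voltage s m).lift.Adj (g, hub) (g, leg k 0 (by omega)))
  rw [apply_hub hs φ, he₀, lift_adj_hub_leg] at hadj₀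
  obtain ⟨rfl, rfl⟩ := hadj₀
  refine ⟨k', fun j => ?_⟩
  induction j using Nat.strong_induction_on with
  | _ j IH =>
    intro hj
    rcases j with _ | j
    · exact ⟨hj₀, he₀⟩
    obtain ⟨hj', he⟩ := IH j (by omega) (by omega)
    obtain ⟨h₁, k₁, j₁, hj₁, he₁⟩ := exists_apply_leg_eq_leg hs φ g k (j + 1) hj
    have hadj := φ.map_adj_iff.2 (lift_adj_leg_leg.2 ⟨rfl, rfl, .inl rfl⟩ :
      (voltage s m).lift.Adj (g, leg k j (by omega)) (g, leg k (j + 1) hj))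
    rw [he, he₁, lift_adj_leg_leg] at hadj
    obtain ⟨rfl, rfl, rfl | rfl⟩ := hadj
    · exact ⟨hj₁, he₁⟩
    -- the other neighbour of `leg k' j` is already the image of `leg k (j - 1)`
    obtain ⟨_, he₂⟩ := IH j₁ (by omega) (by omega)
    have := φ.injective (he₂.trans he₁.symm)
    simp at this
    omega

lemma apply_leg (g : H) (k : Fin 3) (j : ℕ) (hj : j < m + k + 1) :
    φ (g, leg k j hj) = ((φ (g, hub)).1, leg k j hj) := by
  choose σ hσ using exists_apply_leg hs φ g
  -- leg `k` fits into leg `σ k`, and `σ` is injective, so `σ` is the identity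
  have hσ_le : ∀ k, k ≤ σ k := fun k => by
    obtain ⟨h, -⟩ := hσ k (m + k) (by omega)
    rw [Fin.le_iff_val_le_val]; omega
  have hσ_inj : Injective σ := fun k₁ k₂ h12 => by
    obtain ⟨_, h₁⟩ := hσ k₁ 0 (by omega)
    obtain ⟨_, h₂⟩ := hσ k₂ 0 (by omega)
    have : φ (g, leg k₁ 0 (by omega)) = φ (g, leg k₂ 0 (by omega)) := by
      simp [h₁, h₂, h12]
    simpa using φ.injective this
  obtain ⟨_, he⟩ := hσ k j hj
  simpa [congrFun (Fin.eq_id_of_injective_of_le hσ_inj hσ_le) k] using he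

lemma fst_apply_hub_mul (g : H) (i : Fin n) :
    (φ (g * s i, hub)).1 = (φ (g, hub)).1 * s i := by
  have hadj := φ.map_adj_iff.2
    (show (voltage s m).lift.Adj (g, hub) (g * s i, gen i) by simp [volt])
  rw [apply_hub hs φ, apply_gen hs φ] at hadj
  simp only [Voltage.lift_adj, voltage_volt, volt, mem_insert, mem_singleton] at hadj
  refine eq_mul_of_inv_mul_eq (hadj.resolve_left fun h1 => hs i ?_)
  have := φ.injective ((apply_hub hs φ g).trans (by rw [inv_mul_eq_one.1 h1, ← apply_hub hs φ]))
  simpa using this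

lemma fst_apply_hub (hgen : Subgroup.closure (Set.range s) = ⊤) (g : H) :
    (φ (g, hub)).1 = (φ (1, hub)).1 * g := by
  suffices ∀ h, (φ (h * g, hub)).1 = (φ (h, hub)).1 * g by simpa using this 1
  induction (hgen ▸ Subgroup.mem_top g : g ∈ Subgroup.closure (Set.range s))
    using Subgroup.closure_induction with
  | mem t ht => obtain ⟨i, rfl⟩ := ht; exact fun h => fst_apply_hub_mul hs φ h i
  | one => simp
  | mul x y _ _ hx hy => intro h; rw [← mul_assoc, hy, hx, mul_assoc]
  | inv x _ hx => intro h; rw [eq_mul_inv_iff_mul_eq, ← hx, inv_mul_cancel_right]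

lemma apply_eq (hgen : Subgroup.closure (Set.range s) = ⊤) (x : H × Base n m) :
    φ x = ((φ (1, hub)).1 * x.1, x.2) := by
  obtain ⟨g, b⟩ := x
  rw [← fst_apply_hub hs φ hgen]
  cases b with
  | hub => exact apply_hub hs φ g
  | gen i => exact apply_gen hs φ g i
  | mark i => exact apply_mark hs φ g i
  | leg k j hj => exact apply_leg hs φ g k j hj

end Rigidity

noncomputable def autMulEquiv [Fintype H] (hs : ∀ i, s i ≠ 1)
    (hgen : Subgroup.closure (Set.range s) = ⊤) :
    ((voltage s m).lift ≃g (voltage s m).lift) ≃* H :=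
  (voltage s m).autMulEquivOfRigid fun φ => ⟨_, apply_eq hs φ hgen⟩

lemma connected_lift_voltage (hgen : Subgroup.closure (Set.range s) = ⊤) :
    (voltage s m).lift.Connected := by
  refine (voltage s m).connected_lift hub hgen ?_ fun b => ?_
  · rintro _ ⟨i, rfl⟩
    have h₁ : (voltage s m).lift.Adj (1, hub) (s i, gen i) := by simp [volt]
    have h₂ : (voltage s m).lift.Adj (s i, gen i) (s i, hub) := by simp [volt]
    exact h₁.reachable.trans h₂.reachable
  cases b with
  | hub => rfl
  | gen i => exact Adj.reachable (by simp [volt])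
  | mark i => exact Adj.reachable (by simp [volt])
  | leg k j hj =>
    induction j with
    | zero => exact Adj.reachable (by simp [volt])
    | succ j ih =>
      exact (Adj.reachable (lift_adj_leg_leg.2 ⟨rfl, rfl, .inr rfl⟩)).trans (ih (by omega))

end Frucht

/-- **Frucht's theorem (strong form).** For every finite group `G` there exist infinitely
many pairwise non-isomorphic finite connected simple graphs whose automorphism group is
isomorphic to `G`. -/
theorem frucht_infinitely_many_connected (G : Type*) [Group G] [Finite G] :
    ∃ (V : ℕ → Type) (_ : ∀ n, Fintype (V n)) (Γ : ∀ n, SimpleGraph (V n)),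
      (∀ n, (Γ n).Connected) ∧
      (∀ m n, m ≠ n → IsEmpty (Γ m ≃g Γ n)) ∧
      (∀ n, Nonempty ((Γ n ≃g Γ n) ≃* G)) := by
  classical
  let H : Type := Shrink.{0} G
  have : Fintype H := Fintype.ofFinite H
  let e := (Fintype.equivFin {t : H // t ≠ 1}).symm
  let s : Fin _ → H := fun i => (e i).1
  have hs : ∀ i, s i ≠ 1 := fun i => (e i).2
  have hgen : Subgroup.closure (Set.range s) = ⊤ := by
    refine eq_top_iff.2 fun g _ => ?_
    obtain rfl | hg := eq_or_ne g 1
    · exact one_mem _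
    · exact Subgroup.subset_closure ⟨e.symm ⟨g, hg⟩, by simp [s]⟩
  refine ⟨fun m => H × Frucht.Base _ m, fun _ => inferInstance,
    fun m => (Frucht.voltage s m).lift, fun m => Frucht.connected_lift_voltage hgen,
    fun m m' hmm' => ⟨fun φ => hmm' ?_⟩,
    fun m => ⟨(Frucht.autMulEquiv hs hgen).trans Shrink.mulEquiv⟩⟩
  have hcard := Fintype.card_congr φ.toEquiv
  simp only [Fintype.card_prod, Frucht.Base.card_eq] at hcard
  have := Nat.eq_of_mul_eq_mul_left Fintype.card_pos hcard
  omega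
end
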